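/- arXiv:2306.13788 — 2 statements merged into one kernel-verified Lean document; each statement's English description precedes it below -/
import Mathlib

section
/- Let f satisfy hypothesis (H) and be of type A, B, or C, and for a, b > 0 denote by c*_{a,b} the critical speed. Then for each fixed b > 0 the map a ↦ c*_{a,b} is nonincreasing on (0, +∞), and for each fixed a > 0 the map b ↦ c*_{a,b} is nondecreasing on (0, +∞). -/
/-!
Write `g = a R_{a,b}` and `g' = a' R_{a',b'}`; in both claims `g ≤ g'` on `(0, ∞)`, and we show
that an admissible speed `c` for `(a, b)` bounds the critical speed `c'` for `(a', b')`.
Integrating `y' = c g(y) - f` over `[0, 1]` gives `c ∫ g(y) = F(1) ≥ 0`, so `c ≥ 0`. If `c' > c`,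
pick `c < c'' < c'` and let `Y`, `Z` be the profiles of speeds `c` for `g` and `c'` for `g'`.
Then `c g < c'' g' < c' g'`, so `Z < Y` by a first-crossing argument, and the band between `Z`
and `Y` is invariant for `y' = c'' g'(y) - f` run backwards in `v`. Solving backwards from
`Y(1 - ε)` on `[ε, 1 - ε]`, where `Z` is bounded away from `0` and the equation is Lipschitz,
gives solutions that decrease as `ε ↓ 0`; their limit solves the integral equation, so it is a
profile of speed `c'' < c'` for `(a', b')`, contradicting the minimality of `c'`.
-/

open Real Set Filter Topology

/-- `Ffn f v = ∫₀^v f(s) ds`. -/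
noncomputable def Ffn (f : ℝ → ℝ) (v : ℝ) : ℝ := ∫ s in (0:ℝ)..v, f s

/-- Hypothesis (H): `f` continuous on `[0,1]`, vanishing at the endpoints,
with linear controls at `0` and `1`. -/
def HypH (f : ℝ → ℝ) : Prop :=
  ContinuousOn f (Set.Icc 0 1) ∧ f 0 = 0 ∧ f 1 = 0 ∧
    ∃ k > (0:ℝ), ∀ s ∈ Set.Icc (0:ℝ) 1, |f s| ≤ k * s ∧ |f s| ≤ k * (1 - s)

/-- Type A (monostable): `f > 0` on `(0,1)`. -/
def TypeA (f : ℝ → ℝ) : Prop := ∀ s ∈ Set.Ioo (0:ℝ) 1, 0 < f s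

/-- Type B (combustion) with switching point `α`. -/
def TypeB (f : ℝ → ℝ) (α : ℝ) : Prop :=
  α ∈ Set.Ioo (0:ℝ) 1 ∧ (∀ s ∈ Set.Icc (0:ℝ) α, f s = 0) ∧
    ∀ s ∈ Set.Ioo α 1, 0 < f s

/-- Type C (bistable) with switching point `α` and `∫₀¹ f ≥ 0`. -/
def TypeC (f : ℝ → ℝ) (α : ℝ) : Prop :=
  α ∈ Set.Ioo (0:ℝ) 1 ∧ (∀ s ∈ Set.Ioo (0:ℝ) α, f s < 0) ∧
    (∀ s ∈ Set.Ioo α 1, 0 < f s) ∧ 0 ≤ Ffn f 1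

/-- `R_{a,b}(s) = √(s(2a + b²s))/(a + b²s)`. -/
noncomputable def Rab (a b s : ℝ) : ℝ :=
  Real.sqrt (s * (2 * a + b ^ 2 * s)) / (a + b ^ 2 * s)

/-- `c` is an admissible speed for `(f, a, b)`: the first-order reduction
`y' = c·a·R_{a,b}(y) − f(v)` has a solution on `[0,1]` with `y(0) = y(1) = 0`
and `y > 0` on `(0,1)`. -/
def Admissible (f : ℝ → ℝ) (a b c : ℝ) : Prop :=
  ∃ y : ℝ → ℝ, y 0 = 0 ∧ y 1 = 0 ∧ (∀ v ∈ Set.Ioo (0:ℝ) 1, 0 < y v) ∧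
    ∀ v ∈ Set.Icc (0:ℝ) 1,
      HasDerivWithinAt y (c * a * Rab a b (y v) - f v) (Set.Icc 0 1) v

/-- A (monotone) front profile propagating with speed `c` for parameters `a, b`:
a strictly increasing `C²` solution of `(v'/√(a² − b²(v')²))' − c v' + f(v) = 0`
with `|v'| < a/b`, connecting `0` (at `−∞`) and `1` (at `+∞`). -/
def FrontProfile (f : ℝ → ℝ) (a b c : ℝ) (v : ℝ → ℝ) : Prop :=
  StrictMono v ∧ ContDiff ℝ 2 v ∧ (∀ z, |deriv v z| < a / b) ∧
    (∀ z, deriv (fun t => deriv v t / Real.sqrt (a ^ 2 - b ^ 2 * (deriv v t) ^ 2)) z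
        - c * deriv v z + f (v z) = 0) ∧
    Filter.Tendsto v Filter.atBot (nhds 0) ∧ Filter.Tendsto v Filter.atTop (nhds 1)

open intervalIntegral MeasureTheory
open scoped NNReal Interval

theorem image_le_of_deriv_left_lt_deriv_boundary {f f' B B' : ℝ → ℝ} {a b : ℝ}
    (hf : ContinuousOn f (Icc a b)) (hf' : ∀ x ∈ Ioc a b, HasDerivWithinAt f (f' x) (Iic x) x)
    (hb : f b ≤ B b) (hB : ContinuousOn B (Icc a b))
    (hB' : ∀ x ∈ Ioc a b, HasDerivWithinAt B (B' x) (Iic x) x)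
    (bound : ∀ x ∈ Ioc a b, f x = B x → B' x < f' x) : ∀ ⦃x⦄, x ∈ Icc a b → f x ≤ B x := by
  have hmaps : MapsTo Neg.neg (Icc (-b) (-a)) (Icc a b) :=
    fun x hx => ⟨le_neg.mp hx.2, neg_le.mp hx.1⟩
  have hneg : ∀ x ∈ Ico (-b) (-a), -x ∈ Ioc a b := fun x hx => ⟨lt_neg.mp hx.2, neg_le.mp hx.1⟩
  have hreflect {g g' : ℝ → ℝ} (hg : ∀ x ∈ Ioc a b, HasDerivWithinAt g (g' x) (Iic x) x)
      (x : ℝ) (hx : x ∈ Ico (-b) (-a)) : HasDerivWithinAt (g ∘ Neg.neg) (-g' (-x)) (Ici x) x := by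
    have hmaps' : MapsTo Neg.neg (Ici x) (Iic (-x)) := fun y hy => neg_le_neg (mem_Ici.mp hy)
    simpa using (hg (-x) (hneg x hx)).comp x (hasDerivAt_neg x).hasDerivWithinAt hmaps'
  intro x hx
  simpa using image_le_of_deriv_right_lt_deriv_boundary' (hf.comp continuousOn_neg hmaps)
    (hreflect hf') (by simpa using hb) (hB.comp continuousOn_neg hmaps) (hreflect hB')
    (fun y hy hfy => neg_lt_neg (bound (-y) (hneg y hy) hfy))
    (x := -x) ⟨neg_le_neg hx.2, neg_le_neg hx.1⟩

theorem HasDerivWithinAt.of_squeeze {l u g : ℝ → ℝ} {d x : ℝ} {s : Set ℝ}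
    (hl : HasDerivWithinAt l d s x) (hu : HasDerivWithinAt u d s x)
    (hlg : ∀ᶠ y in 𝓝[s] x, l y ≤ g y) (hgu : ∀ᶠ y in 𝓝[s] x, g y ≤ u y)
    (hlx : l x = g x) (hux : u x = g x) : HasDerivWithinAt g d s x := by
  rw [hasDerivWithinAt_iff_isLittleO] at hl hu ⊢
  refine Asymptotics.IsBigO.trans_isLittleO ?_ (hl.norm_left.add hu.norm_left)
  refine Asymptotics.IsBigO.of_bound 1 ?_
  filter_upwards [hlg, hgu] with y hly hyu
  rw [one_mul, Real.norm_of_nonneg (add_nonneg (norm_nonneg _) (norm_nonneg _))]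
  simp only [Real.norm_eq_abs, smul_eq_mul, hlx, hux]
  exact (abs_le_max_abs_abs (by linarith) (by linarith)).trans
    (max_le_add_of_nonneg (abs_nonneg _) (abs_nonneg _))

theorem exists_eq_forall_mem_Icc_hasDerivWithinAt_of_lipschitzWith {E : Type*}
    [NormedAddCommGroup E] [NormedSpace ℝ E] [CompleteSpace E] {v : ℝ → E → E} {a b t₀ : ℝ}
    {K L : ℝ≥0} (ht₀ : t₀ ∈ Icc a b) (hlip : ∀ t ∈ Icc a b, LipschitzWith K (v t))
    (hcont : ∀ x, ContinuousOn (v · x) (Icc a b)) (hbound : ∀ t ∈ Icc a b, ∀ x, ‖v t x‖ ≤ L)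
    (x₀ : E) :
    ∃ z : ℝ → E, z t₀ = x₀ ∧ ∀ t ∈ Icc a b, HasDerivWithinAt z (v t (z t)) (Icc a b) t := by
  have hPL : IsPicardLindelof v ⟨t₀, ht₀⟩ x₀
      ⟨L * max (b - t₀) (t₀ - a), mul_nonneg L.2 (le_max_of_le_left (sub_nonneg.2 ht₀.2))⟩
      0 L K :=
    ⟨fun t ht => (hlip t ht).lipschitzOnWith, fun x _ => hcont x,
      fun t ht x _ => hbound t ht x, by rw [NNReal.coe_zero, sub_zero]; exact le_rfl⟩
  exact hPL.exists_eq_forall_mem_Icc_hasDerivWithinAt₀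

theorem ODE_solution_le_of_mem_Icc_left {v : ℝ → ℝ → ℝ} {s : ℝ → Set ℝ} {K : ℝ≥0}
    {f g : ℝ → ℝ} {a b : ℝ} (hv : ∀ t ∈ Icc a b, LipschitzOnWith K (v t) (s t))
    (hf : ∀ t ∈ Icc a b, HasDerivWithinAt f (v t (f t)) (Icc a b) t)
    (hfs : ∀ t ∈ Icc a b, f t ∈ s t)
    (hg : ∀ t ∈ Icc a b, HasDerivWithinAt g (v t (g t)) (Icc a b) t)
    (hgs : ∀ t ∈ Icc a b, g t ∈ s t) (hb : f b ≤ g b) : ∀ t ∈ Icc a b, f t ≤ g t := by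
  intro u hu
  by_contra! hgf
  have hfc : ContinuousOn f (Icc a b) := fun t ht => (hf t ht).continuousWithinAt
  have hgc : ContinuousOn g (Icc a b) := fun t ht => (hg t ht).continuousWithinAt
  obtain ⟨c, hc, hfgc⟩ : ∃ c ∈ Icc u b, g c - f c = 0 :=
    intermediate_value_Icc hu.2 ((hgc.sub hfc).mono (Icc_subset_Icc_left hu.1))
      ⟨by simp only [Pi.sub_apply]; linarith, by simp only [Pi.sub_apply]; linarith⟩
  have hsub : Icc u c ⊆ Icc a b := Icc_subset_Icc hu.1 hc.2
  have hleft {h : ℝ → ℝ} (hh : ∀ t ∈ Icc a b, HasDerivWithinAt h (v t (h t)) (Icc a b) t)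
      (t : ℝ) (ht : t ∈ Ioc u c) : HasDerivWithinAt h (v t (h t)) (Iic t) t :=
    (hh t (hsub (Ioc_subset_Icc_self ht))).mono_of_mem_nhdsWithin
      (Icc_mem_nhdsLE_of_mem ⟨hu.1.trans_lt ht.1, ht.2.trans hc.2⟩)
  have hfg := ODE_solution_unique_of_mem_Icc_left
    (fun t ht => hv t (hsub (Ioc_subset_Icc_self ht))) (hfc.mono hsub) (hleft hf)
    (fun t ht => hfs t (hsub (Ioc_subset_Icc_self ht))) (hgc.mono hsub) (hleft hg)
    (fun t ht => hgs t (hsub (Ioc_subset_Icc_self ht))) (by linarith) ⟨le_rfl, hc.1⟩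
  exact hgf.ne' hfg

theorem sub_eq_integral_of_tendsto {G f w : ℝ → ℝ} {u : ℕ → ℝ → ℝ} {α β C : ℝ} (hαβ : α ≤ β)
    (hG : ContinuousOn G (Ici 0)) (hf : ContinuousOn f (Icc α β))
    (hC : ∀ t ∈ Icc α β, ∀ x, 0 ≤ x → |G x - f t| ≤ C)
    (hu : ∀ n, ∀ t ∈ Icc α β, 0 ≤ u n t)
    (hlim : ∀ t ∈ Icc α β, Tendsto (fun n => u n t) atTop (𝓝 (w t)))
    (hsol : ∀ᶠ n in atTop, ∀ t ∈ Icc α β,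
      HasDerivWithinAt (u n) (G (u n t) - f t) (Icc α β) t) :
    w β - w α = ∫ t in α..β, G (w t) - f t := by
  have hcont : ∀ᶠ n in atTop, ContinuousOn (fun t => G (u n t) - f t) (Icc α β) :=
    hsol.mono fun n hn =>
      (hG.comp (fun t ht => (hn t ht).continuousWithinAt) fun t ht => hu n t ht).sub hf
  have hftc : ∀ᶠ n in atTop, ∫ t in α..β, G (u n t) - f t = u n β - u n α := by
    filter_upwards [hsol, hcont] with n hn hc
    exact integral_eq_sub_of_hasDerivAt_of_le hαβ (fun t ht => (hn t ht).continuousWithinAt)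
      (fun t ht => (hn t (Ioo_subset_Icc_self ht)).hasDerivAt (Icc_mem_nhds ht.1 ht.2))
      (hc.intervalIntegrable_of_Icc hαβ)
  have hmem : ∀ t ∈ Ι α β, t ∈ Icc α β := fun t ht => Ioc_subset_Icc_self (by
    rwa [uIoc_of_le hαβ] at ht)
  refine tendsto_nhds_unique ((hlim β ⟨hαβ, le_rfl⟩).sub (hlim α ⟨le_rfl, hαβ⟩)) ?_
  refine (tendsto_integral_filter_of_dominated_convergence (fun _ => C) ?_ ?_
    intervalIntegrable_const ?_).congr' hftc
  · filter_upwards [hcont] with n hc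
    exact (hc.mono hmem).aestronglyMeasurable measurableSet_uIoc
  · exact Eventually.of_forall fun n => ae_of_all _ fun t ht =>
      hC t (hmem t ht) _ (hu n t (hmem t ht))
  · refine ae_of_all _ fun t ht => ?_
    have hw : 0 ≤ w t := ge_of_tendsto' (hlim t (hmem t ht)) fun n => hu n t (hmem t ht)
    exact (((hG (w t) hw).tendsto.comp (tendsto_nhdsWithin_iff.2
      ⟨hlim t (hmem t ht), Eventually.of_forall fun n => hu n t (hmem t ht)⟩)).sub_const (f t))

theorem lipschitzOnWith_of_forall_sub_eq_integral {w φ : ℝ → ℝ} {a b C : ℝ}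
    (h : ∀ u ∈ Ioo a b, ∀ u' ∈ Ioo a b, u ≤ u' → w u' - w u = ∫ t in u..u', φ t)
    (hφ : ∀ t ∈ Ioo a b, |φ t| ≤ C) : LipschitzOnWith (Real.toNNReal C) w (Ioo a b) := by
  have key : ∀ x ∈ Ioo a b, ∀ y ∈ Ioo a b, y ≤ x → dist (w x) (w y) ≤ C * dist x y := by
    intro x hx y hy hyx
    rw [dist_eq_norm, Real.dist_eq, h y hy x hx hyx]
    refine norm_integral_le_of_norm_le_const fun t ht => ?_
    rw [uIoc_of_le hyx] at ht
    exact (Real.norm_eq_abs _).trans_le (hφ t ⟨hy.1.trans ht.1, ht.2.trans_lt hx.2⟩)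
  refine LipschitzOnWith.of_dist_le' fun x hx y hy => ?_
  rcases le_total y x with hyx | hxy
  · exact key x hx y hy hyx
  · rw [dist_comm, dist_comm x]
    exact key y hy x hx hxy

theorem hasDerivAt_of_forall_sub_eq_integral {w φ : ℝ → ℝ} {a b t : ℝ}
    (h : ∀ u ∈ Ioo a b, ∀ u' ∈ Ioo a b, u ≤ u' → w u' - w u = ∫ s in u..u', φ s)
    (hφ : ContinuousOn φ (Ioo a b)) (ht : t ∈ Ioo a b) : HasDerivAt w (φ t) t := by
  have hrepr : ∀ x ∈ Ioo a b, w x = w t + ∫ s in t..x, φ s := by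
    intro x hx
    rcases le_total t x with htx | hxt
    · linarith [h t ht x hx htx]
    · rw [integral_symm]
      linarith [h x hx t ht hxt]
  refine ((integral_hasDerivAt_right IntervalIntegrable.refl
    (hφ.stronglyMeasurableAtFilter isOpen_Ioo t ht)
    (hφ.continuousAt (Ioo_mem_nhds ht.1 ht.2))).const_add (w t)).congr_of_eventuallyEq ?_
  filter_upwards [Ioo_mem_nhds ht.1 ht.2] with x hx using hrepr x hx

structure IsPosSolution (f G y : ℝ → ℝ) : Prop where
  zero_left : y 0 = 0
  zero_right : y 1 = 0
  pos : ∀ v ∈ Ioo (0:ℝ) 1, 0 < y v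
  hasDerivWithinAt : ∀ v ∈ Icc (0:ℝ) 1, HasDerivWithinAt y (G (y v) - f v) (Icc 0 1) v

theorem admissible_iff {f : ℝ → ℝ} {a b c : ℝ} :
    Admissible f a b c ↔ ∃ y, IsPosSolution f (fun s => c * a * Rab a b s) y :=
  ⟨fun ⟨y, h0, h1, hpos, hy⟩ => ⟨y, h0, h1, hpos, hy⟩, fun ⟨y, h⟩ => ⟨y, h.1, h.2, h.3, h.4⟩⟩

namespace IsPosSolution

variable {f G y : ℝ → ℝ}

theorem continuousOn (h : IsPosSolution f G y) : ContinuousOn y (Icc 0 1) :=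
  fun v hv => (h.hasDerivWithinAt v hv).continuousWithinAt

theorem nonneg (h : IsPosSolution f G y) {v : ℝ} (hv : v ∈ Icc (0:ℝ) 1) : 0 ≤ y v := by
  rcases hv.1.eq_or_lt with rfl | h0
  · exact h.zero_left.ge
  rcases hv.2.eq_or_lt with rfl | h1
  · exact h.zero_right.ge
  exact (h.pos v ⟨h0, h1⟩).le

theorem hasDerivAt (h : IsPosSolution f G y) {v : ℝ} (hv : v ∈ Ioo (0:ℝ) 1) :
    HasDerivAt y (G (y v) - f v) v :=
  (h.hasDerivWithinAt v (Ioo_subset_Icc_self hv)).hasDerivAt (Icc_mem_nhds hv.1 hv.2)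

theorem exists_pos_le (h : IsPosSolution f G y) {δ T : ℝ} (hδ : 0 < δ) (hT : T < 1) :
    ∃ m > 0, ∀ t ∈ Icc δ T, m ≤ y t :=
  isCompact_Icc.exists_forall_le' (h.continuousOn.mono (Icc_subset_Icc hδ.le hT.le))
    fun t ht => h.pos t ⟨hδ.trans_le ht.1, ht.2.trans_lt hT⟩

theorem integral_eq (h : IsPosSolution f G y) (hf : ContinuousOn f (Icc 0 1))
    (hG : ContinuousOn G (Ici 0)) : ∫ v in (0:ℝ)..1, G (y v) = Ffn f 1 := by
  have hGy : ContinuousOn (fun v => G (y v)) (Icc 0 1) :=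
    hG.comp h.continuousOn fun v hv => h.nonneg hv
  have hftc := integral_eq_sub_of_hasDerivAt_of_le zero_le_one h.continuousOn
    (fun v hv => h.hasDerivAt hv) ((hGy.sub hf).intervalIntegrable_of_Icc zero_le_one)
  rw [h.zero_left, h.zero_right, sub_self, integral_sub (hGy.intervalIntegrable_of_Icc
    zero_le_one) (hf.intervalIntegrable_of_Icc zero_le_one)] at hftc
  rw [Ffn]
  linarith

theorem le_of_le_on_Ioo {G' y' : ℝ → ℝ} (h : IsPosSolution f G y) (h' : IsPosSolution f G' y')
    (hle : ∀ v ∈ Ioo (0:ℝ) 1, y v ≤ y' v) : ∀ v ∈ Icc (0:ℝ) 1, y v ≤ y' v := by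
  intro v hv
  rcases hv.1.eq_or_lt with rfl | hv0
  · rw [h.zero_left, h'.zero_left]
  rcases hv.2.eq_or_lt with rfl | hv1
  · rw [h.zero_right, h'.zero_right]
  exact hle v ⟨hv0, hv1⟩

theorem lt_of_lt_of_monotoneOn {G' y' : ℝ → ℝ} (h : IsPosSolution f G y)
    (h' : IsPosSolution f G' y') (hlt : ∀ s, 0 < s → G s < G' s) (hmono : MonotoneOn G' (Ici 0)) :
    ∀ v ∈ Ioo (0:ℝ) 1, y' v < y v := by
  intro v₀ hv₀
  by_contra! hv₀y
  set w := fun v => y' v - y v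
  have hw' : ∀ v ∈ Ioo (0:ℝ) 1, HasDerivAt w (G' (y' v) - f v - (G (y v) - f v)) v :=
    fun v hv => (h'.hasDerivAt hv).sub (h.hasDerivAt hv)
  have hw'_pos : ∀ v ∈ Ioo (0:ℝ) 1, 0 ≤ w v → 0 < G' (y' v) - f v - (G (y v) - f v) := by
    intro v hv hwv
    have hyv := h.pos v hv
    have := hmono hyv.le (hyv.le.trans (sub_nonneg.1 hwv)) (sub_nonneg.1 hwv)
    linarith [hlt _ hyv]
  have hsub : Icc v₀ 1 ⊆ Icc 0 1 := Icc_subset_Icc_left hv₀.1.le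
  have hwc : ContinuousOn w (Icc v₀ 1) := (h'.continuousOn.sub h.continuousOn).mono hsub
  have hIco : ∀ x ∈ Ico v₀ 1, x ∈ Ioo (0:ℝ) 1 := fun x hx => ⟨hv₀.1.trans_le hx.1, hx.2⟩
  have hw_nonneg : ∀ x ∈ Icc v₀ 1, -w x ≤ 0 :=
    image_le_of_deriv_right_lt_deriv_boundary hwc.neg
      (fun x hx => (hw' x (hIco x hx)).neg.hasDerivWithinAt) (by simp [w, hv₀y])
      (fun _ => hasDerivAt_const _ (0:ℝ))
      fun x hx hwx => neg_neg_iff_pos.2 (hw'_pos x (hIco x hx) (neg_eq_zero.1 hwx).ge)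
  have hw_mono : StrictMonoOn w (Icc v₀ 1) := by
    refine strictMonoOn_of_deriv_pos (convex_Icc _ _) hwc fun x hx => ?_
    rw [interior_Icc] at hx
    have hx' : x ∈ Ioo (0:ℝ) 1 := ⟨hv₀.1.trans hx.1, hx.2⟩
    rw [(hw' x hx').deriv]
    exact hw'_pos x hx' (neg_nonpos.1 (hw_nonneg x (Ioo_subset_Icc_self hx)))
  have := hw_mono ⟨le_rfl, hv₀.2.le⟩ ⟨hv₀.2.le, le_rfl⟩ hv₀.2
  simp only [w, h.zero_right, h'.zero_right, sub_zero] at this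
  linarith

end IsPosSolution

section SubSuperSolution

variable {f G Gsup Gsub Y Z : ℝ → ℝ} {C : ℝ}

theorem exists_hasDerivWithinAt_max {m δ T : ℝ} {K : ℝ≥0} (hδT : δ ≤ T)
    (hf : ContinuousOn f (Icc δ T)) (hG : LipschitzOnWith K G (Ici m))
    (hC : ∀ t ∈ Icc δ T, ∀ x, m ≤ x → |G x - f t| ≤ C) (x₀ : ℝ) :
    ∃ z : ℝ → ℝ, z T = x₀ ∧
      ∀ t ∈ Icc δ T, HasDerivWithinAt z (G (max (z t) m) - f t) (Icc δ T) t := by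
  refine exists_eq_forall_mem_Icc_hasDerivWithinAt_of_lipschitzWith
    (v := fun t x => G (max x m) - f t) (K := K) (L := C.toNNReal)
    ⟨hδT, le_rfl⟩ (fun t _ => LipschitzWith.of_dist_le_mul fun x y => ?_)
    (fun x => continuousOn_const.sub hf) (fun t ht x => ?_) x₀
  · rw [dist_sub_right]
    refine (hG.dist_le_mul _ (le_max_right x m) _ (le_max_right y m)).trans ?_
    exact mul_le_mul_of_nonneg_left (abs_max_sub_max_le_abs x y m) K.2
  · exact (hC t ht _ (le_max_right x m)).trans (Real.le_coe_toNNReal C)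

/-- Run backwards from `T`, `z` cannot cross `Y` (where `z' > Y'`) nor `Z` (where `z' < Z'`). -/
theorem le_and_le_of_hasDerivWithinAt_max {z : ℝ → ℝ} {m δ T : ℝ} (hδ : 0 < δ) (hT : T < 1)
    (hY : IsPosSolution f Gsup Y) (hZ : IsPosSolution f Gsub Z)
    (hsup : ∀ s, 0 < s → Gsup s < G s) (hsub : ∀ s, 0 < s → G s < Gsub s)
    (hZY : ∀ v ∈ Ioo (0:ℝ) 1, Z v ≤ Y v) (hm : ∀ t ∈ Icc δ T, m ≤ Z t)
    (hz : ∀ t ∈ Icc δ T, HasDerivWithinAt z (G (max (z t) m) - f t) (Icc δ T) t)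
    (hzT : z T = Y T) : ∀ t ∈ Icc δ T, Z t ≤ z t ∧ z t ≤ Y t := by
  have hI : ∀ t ∈ Icc δ T, t ∈ Ioo (0:ℝ) 1 := fun t ht => ⟨hδ.trans_le ht.1, ht.2.trans_lt hT⟩
  have hI' : ∀ t ∈ Ioc δ T, t ∈ Ioo (0:ℝ) 1 := fun t ht => hI t (Ioc_subset_Icc_self ht)
  have hIcc : Icc δ T ⊆ Icc 0 1 := fun t ht => Ioo_subset_Icc_self (hI t ht)
  have hzc : ContinuousOn z (Icc δ T) := fun t ht => (hz t ht).continuousWithinAt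
  have hz' : ∀ t ∈ Ioc δ T, HasDerivWithinAt z (G (max (z t) m) - f t) (Iic t) t :=
    fun t ht => (hz t (Ioc_subset_Icc_self ht)).mono_of_mem_nhdsWithin (Icc_mem_nhdsLE_of_mem ht)
  intro t ht
  have hTmem : T ∈ Icc δ T := ⟨ht.1.trans ht.2, le_rfl⟩
  refine ⟨image_le_of_deriv_left_lt_deriv_boundary (hZ.continuousOn.mono hIcc)
    (fun x hx => (hZ.hasDerivAt (hI' x hx)).hasDerivWithinAt) (hzT ▸ hZY T (hI T hTmem)) hzc hz'
    (fun x hx hZx => ?_) ht,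
    image_le_of_deriv_left_lt_deriv_boundary hzc hz' hzT.le (hY.continuousOn.mono hIcc)
    (fun x hx => (hY.hasDerivAt (hI' x hx)).hasDerivWithinAt) (fun x hx hYx => ?_) ht⟩
  · rw [← hZx, max_eq_left (hm x (Ioc_subset_Icc_self hx))]
    linarith [hsub (Z x) (hZ.pos x (hI' x hx))]
  · rw [hYx, max_eq_left ((hm x (Ioc_subset_Icc_self hx)).trans (hZY x (hI' x hx)))]
    linarith [hsup (Y x) (hY.pos x (hI' x hx))]

theorem exists_solution_Icc_between (hf : ContinuousOn f (Icc 0 1))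
    (hC : ∀ t ∈ Icc (0:ℝ) 1, ∀ x, 0 ≤ x → |G x - f t| ≤ C)
    (hGl : ∀ m > 0, ∃ K, LipschitzOnWith K G (Ici m))
    (hY : IsPosSolution f Gsup Y) (hZ : IsPosSolution f Gsub Z)
    (hsup : ∀ s, 0 < s → Gsup s < G s) (hsub : ∀ s, 0 < s → G s < Gsub s)
    (hZY : ∀ v ∈ Ioo (0:ℝ) 1, Z v ≤ Y v) {δ T : ℝ} (hδ : 0 < δ) (hδT : δ ≤ T) (hT : T < 1) :
    ∃ z : ℝ → ℝ, z T = Y T ∧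
      (∀ t ∈ Icc δ T, HasDerivWithinAt z (G (z t) - f t) (Icc δ T) t) ∧
      ∀ t ∈ Icc δ T, Z t ≤ z t ∧ z t ≤ Y t := by
  have hIcc : Icc δ T ⊆ Icc 0 1 := Icc_subset_Icc hδ.le hT.le
  obtain ⟨m, hm, hZm⟩ := hZ.exists_pos_le hδ hT
  obtain ⟨K, hK⟩ := hGl m hm
  obtain ⟨z, hzT, hz⟩ := exists_hasDerivWithinAt_max hδT (hf.mono hIcc) hK
    (fun t ht x hx => hC t (hIcc ht) x (hm.le.trans hx)) (Y T)
  have hband := le_and_le_of_hasDerivWithinAt_max hδ hT hY hZ hsup hsub hZY hZm hz hzT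
  refine ⟨z, hzT, fun t ht => ?_, hband⟩
  have hzt := hz t ht
  rwa [max_eq_left ((hZm t ht).trans (hband t ht).1)] at hzt

theorem isPosSolution_of_forall_sub_eq_integral {w : ℝ → ℝ}
    (hf : ContinuousOn f (Icc 0 1)) (hG : ContinuousOn G (Ici 0))
    (hC : ∀ t ∈ Icc (0:ℝ) 1, ∀ x, 0 ≤ x → |G x - f t| ≤ C)
    (hY : IsPosSolution f Gsup Y) (hZ : IsPosSolution f Gsub Z)
    (hsup0 : Gsup 0 = G 0) (hsub0 : Gsub 0 = G 0)
    (hw : ∀ t ∈ Icc (0:ℝ) 1, Z t ≤ w t ∧ w t ≤ Y t)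
    (heq : ∀ u ∈ Ioo (0:ℝ) 1, ∀ u' ∈ Ioo (0:ℝ) 1, u ≤ u' →
      w u' - w u = ∫ t in u..u', G (w t) - f t) :
    IsPosSolution f G w := by
  have hw_nonneg : ∀ t ∈ Icc (0:ℝ) 1, 0 ≤ w t := fun t ht => (hZ.nonneg ht).trans (hw t ht).1
  have hwc : ContinuousOn w (Ioo 0 1) :=
    (lipschitzOnWith_of_forall_sub_eq_integral heq fun t ht =>
      hC t (Ioo_subset_Icc_self ht) _ (hw_nonneg t (Ioo_subset_Icc_self ht))).continuousOn
  have hφc : ContinuousOn (fun t => G (w t) - f t) (Ioo 0 1) :=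
    (hG.comp hwc fun t ht => hw_nonneg t (Ioo_subset_Icc_self ht)).sub
      (hf.mono Ioo_subset_Icc_self)
  -- At `0` and `1`, `w` is squeezed between `Z` and `Y`, which have the same derivative there.
  have hend : ∀ x ∈ Icc (0:ℝ) 1, Z x = 0 → Y x = 0 →
      w x = 0 ∧ HasDerivWithinAt w (G (w x) - f x) (Icc 0 1) x := by
    intro x hx hZx hYx
    have hwx : w x = 0 := le_antisymm (hYx ▸ (hw x hx).2) (hZx ▸ (hw x hx).1)
    have hZ' := hZ.hasDerivWithinAt x hx
    have hY' := hY.hasDerivWithinAt x hx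
    have hG0 : G 0 = G (w x) := by rw [hwx]
    rw [hZx, hsub0, hG0] at hZ'
    rw [hYx, hsup0, hG0] at hY'
    refine ⟨hwx, hZ'.of_squeeze hY' ?_ ?_ (hZx.trans hwx.symm) (hYx.trans hwx.symm)⟩
    · filter_upwards [self_mem_nhdsWithin] with t ht using (hw t ht).1
    · filter_upwards [self_mem_nhdsWithin] with t ht using (hw t ht).2
  have h0 := hend 0 (left_mem_Icc.2 zero_le_one) hZ.zero_left hY.zero_left
  have h1 := hend 1 (right_mem_Icc.2 zero_le_one) hZ.zero_right hY.zero_right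
  refine ⟨h0.1, h1.1, fun v hv => (hZ.pos v hv).trans_le (hw v (Ioo_subset_Icc_self hv)).1,
    fun v hv => ?_⟩
  rcases hv.1.eq_or_lt with rfl | hv0
  · exact h0.2
  rcases hv.2.eq_or_lt with rfl | hv1
  · exact h1.2
  exact (hasDerivAt_of_forall_sub_eq_integral heq hφc ⟨hv0, hv1⟩).hasDerivWithinAt

theorem antitone_piecewise_Icc {z : ℕ → ℝ → ℝ} {ε : ℕ → ℝ} (hε_anti : Antitone ε)
    (hzY : ∀ n, ∀ t ∈ Icc (ε n) (1 - ε n), z n t ≤ Y t)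
    (hanti : ∀ p q, p ≤ q → ∀ t ∈ Icc (ε p) (1 - ε p), z q t ≤ z p t) (t : ℝ) :
    Antitone fun n => (Icc (ε n) (1 - ε n)).piecewise (z n) Y t := by
  intro p q hpq
  by_cases htp : t ∈ Icc (ε p) (1 - ε p)
  · have htq : t ∈ Icc (ε q) (1 - ε q) :=
      Icc_subset_Icc (hε_anti hpq) (by linarith [hε_anti hpq]) htp
    simpa only [piecewise_eq_of_mem _ _ _ htp, piecewise_eq_of_mem _ _ _ htq]
      using hanti p q hpq t htp
  by_cases htq : t ∈ Icc (ε q) (1 - ε q)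
  · simpa only [piecewise_eq_of_notMem _ _ _ htp, piecewise_eq_of_mem _ _ _ htq] using hzY q t htq
  · simp only [piecewise_eq_of_notMem _ _ _ htp, piecewise_eq_of_notMem _ _ _ htq, le_rfl]

theorem exists_isPosSolution_of_antitone {z : ℕ → ℝ → ℝ} {ε : ℕ → ℝ}
    (hf : ContinuousOn f (Icc 0 1)) (hG : ContinuousOn G (Ici 0))
    (hC : ∀ t ∈ Icc (0:ℝ) 1, ∀ x, 0 ≤ x → |G x - f t| ≤ C)
    (hY : IsPosSolution f Gsup Y) (hZ : IsPosSolution f Gsub Z)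
    (hsup0 : Gsup 0 = G 0) (hsub0 : Gsub 0 = G 0) (hZY : ∀ v ∈ Ioo (0:ℝ) 1, Z v ≤ Y v)
    (hε_anti : Antitone ε) (hε_lim : Tendsto ε atTop (𝓝 0))
    (hz : ∀ n, ∀ t ∈ Icc (ε n) (1 - ε n),
      HasDerivWithinAt (z n) (G (z n t) - f t) (Icc (ε n) (1 - ε n)) t)
    (hzb : ∀ n, ∀ t ∈ Icc (ε n) (1 - ε n), Z t ≤ z n t ∧ z n t ≤ Y t)
    (hanti : ∀ p q, p ≤ q → ∀ t ∈ Icc (ε p) (1 - ε p), z q t ≤ z p t) :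
    ∃ w, IsPosSolution f G w := by
  set I : ℕ → Set ℝ := fun n => Icc (ε n) (1 - ε n)
  set u : ℕ → ℝ → ℝ := fun n => (I n).piecewise (z n) Y
  have hub : ∀ n, ∀ t ∈ Icc (0:ℝ) 1, Z t ≤ u n t ∧ u n t ≤ Y t := by
    intro n t ht
    by_cases htn : t ∈ I n
    · simpa only [u, piecewise_eq_of_mem _ _ _ htn] using hzb n t htn
    · simpa only [u, piecewise_eq_of_notMem _ _ _ htn]
        using ⟨hZ.le_of_le_on_Ioo hY hZY t ht, le_rfl⟩
  have hu_anti : ∀ t, Antitone fun n => u n t :=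
    antitone_piecewise_Icc hε_anti (fun n t ht => (hzb n t ht).2) hanti
  set w : ℝ → ℝ := fun t => ⨅ n, u n t
  have hlim : ∀ t ∈ Icc (0:ℝ) 1, Tendsto (fun n => u n t) atTop (𝓝 (w t)) := fun t ht =>
    tendsto_atTop_ciInf (hu_anti t) ⟨Z t, forall_mem_range.2 fun n => (hub n t ht).1⟩
  have hw : ∀ t ∈ Icc (0:ℝ) 1, Z t ≤ w t ∧ w t ≤ Y t := fun t ht =>
    ⟨le_ciInf fun n => (hub n t ht).1,
      (ciInf_le ⟨Z t, forall_mem_range.2 fun n => (hub n t ht).1⟩ 0).trans (hub 0 t ht).2⟩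
  refine ⟨w, isPosSolution_of_forall_sub_eq_integral hf hG hC hY hZ hsup0 hsub0 hw ?_⟩
  intro α hα β hβ hαβ
  have hαβ01 : Icc α β ⊆ Icc 0 1 := Icc_subset_Icc hα.1.le hβ.2.le
  have hev : ∀ᶠ n in atTop, Icc α β ⊆ I n := by
    filter_upwards [hε_lim.eventually (gt_mem_nhds (lt_min hα.1 (sub_pos.2 hβ.2)))] with n hn
    exact Icc_subset_Icc (hn.le.trans (min_le_left _ _)) (by linarith [min_le_right α (1 - β)])
  refine sub_eq_integral_of_tendsto hαβ hG (hf.mono hαβ01) (fun t ht => hC t (hαβ01 ht))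
    (fun n t ht => (hZ.nonneg (hαβ01 ht)).trans (hub n t (hαβ01 ht)).1)
    (fun t ht => hlim t (hαβ01 ht)) ?_
  filter_upwards [hev] with n hn t ht
  have hut : u n t = z n t := piecewise_eq_of_mem _ _ _ (hn ht)
  rw [hut]
  exact ((hz n t (hn ht)).mono hn).congr (fun x hx => piecewise_eq_of_mem _ _ _ (hn hx)) hut

theorem exists_isPosSolution_between (hf : ContinuousOn f (Icc 0 1))
    (hG : ContinuousOn G (Ici 0)) (hC : ∀ t ∈ Icc (0:ℝ) 1, ∀ x, 0 ≤ x → |G x - f t| ≤ C)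
    (hGl : ∀ m > 0, ∃ K, LipschitzOnWith K G (Ici m))
    (hY : IsPosSolution f Gsup Y) (hZ : IsPosSolution f Gsub Z)
    (hsup : ∀ s, 0 < s → Gsup s < G s) (hsub : ∀ s, 0 < s → G s < Gsub s)
    (hsup0 : Gsup 0 = G 0) (hsub0 : Gsub 0 = G 0) (hZY : ∀ v ∈ Ioo (0:ℝ) 1, Z v ≤ Y v) :
    ∃ w, IsPosSolution f G w := by
  set ε : ℕ → ℝ := fun n => 1 / ((n:ℝ) + 2)
  have hε : ∀ n, 0 < ε n := fun n => by positivity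
  have hε_half : ∀ n, ε n ≤ 1 - ε n := fun n => by
    have : ε n ≤ 1 / 2 := one_div_le_one_div_of_le two_pos (by linarith [n.cast_nonneg (α := ℝ)])
    linarith
  have hε_anti : Antitone ε := fun p q hpq =>
    one_div_le_one_div_of_le (by positivity) (by gcongr)
  have hε_lim : Tendsto ε atTop (𝓝 0) :=
    tendsto_const_nhds.div_atTop (tendsto_natCast_atTop_atTop.atTop_add tendsto_const_nhds)
  choose z hzT hz hzb using fun n => exists_solution_Icc_between hf hC hGl hY hZ hsup hsub hZY
    (hε n) (hε_half n) (sub_lt_self 1 (hε n))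
  refine exists_isPosSolution_of_antitone hf hG hC hY hZ hsup0 hsub0 hZY hε_anti hε_lim hz hzb
    fun p q hpq => ?_
  have hIpq : Icc (ε p) (1 - ε p) ⊆ Icc (ε q) (1 - ε q) :=
    Icc_subset_Icc (hε_anti hpq) (by linarith [hε_anti hpq])
  obtain ⟨m, hm, hZm⟩ := hZ.exists_pos_le (hε p) (sub_lt_self 1 (hε p))
  obtain ⟨K, hK⟩ := hGl m hm
  refine ODE_solution_le_of_mem_Icc_left (v := fun t x => G x - f t) (s := fun _ => Ici m) (K := K)
    (fun t _ => LipschitzOnWith.of_dist_le_mul fun x hx y hy => ?_)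
    (fun t ht => (hz q t (hIpq ht)).mono hIpq) (fun t ht => (hZm t ht).trans (hzb q t (hIpq ht)).1)
    (hz p) (fun t ht => (hZm t ht).trans (hzb p t ht).1) ?_
  · rw [dist_sub_right]
    exact hK.dist_le_mul x hx y hy
  · rw [hzT p]
    exact (hzb q _ (hIpq ⟨hε_half p, le_rfl⟩)).2

end SubSuperSolution

section Rab

variable {a b : ℝ}

theorem Rab_zero (a b : ℝ) : Rab a b 0 = 0 := by
  simp [Rab]

theorem Rab_nonneg (ha : 0 < a) {s : ℝ} (hs : 0 ≤ s) : 0 ≤ Rab a b s :=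
  div_nonneg (Real.sqrt_nonneg _) (by positivity)

theorem Rab_pos (ha : 0 < a) {s : ℝ} (hs : 0 < s) : 0 < Rab a b s :=
  div_pos (Real.sqrt_pos.2 (by positivity)) (by positivity)

theorem sq_Rab (ha : 0 < a) {s : ℝ} (hs : 0 ≤ s) :
    Rab a b s ^ 2 = s * (2 * a + b ^ 2 * s) / (a + b ^ 2 * s) ^ 2 := by
  rw [Rab, div_pow, Real.sq_sqrt (by positivity)]

theorem Rab_le_inv (ha : 0 < a) (hb : 0 < b) {s : ℝ} (hs : 0 ≤ s) : Rab a b s ≤ b⁻¹ := by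
  rw [← pow_le_pow_iff_left₀ (Rab_nonneg ha hs) (by positivity) two_ne_zero, sq_Rab ha hs,
    div_le_iff₀ (by positivity), inv_pow, inv_mul_eq_div, le_div_iff₀ (by positivity)]
  nlinarith [sq_nonneg a]

theorem monotoneOn_Rab (ha : 0 < a) : MonotoneOn (Rab a b) (Ici 0) := by
  intro s (hs : 0 ≤ s) t (ht : 0 ≤ t) hst
  rw [← pow_le_pow_iff_left₀ (Rab_nonneg ha hs) (Rab_nonneg ha ht) two_ne_zero, sq_Rab ha hs,
    sq_Rab ha ht, div_le_div_iff₀ (by positivity) (by positivity), ← sub_nonneg]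
  have key : t * (2 * a + b ^ 2 * t) * (a + b ^ 2 * s) ^ 2
      - s * (2 * a + b ^ 2 * s) * (a + b ^ 2 * t) ^ 2
      = a ^ 2 * (t - s) * (2 * a + b ^ 2 * s + b ^ 2 * t) := by ring
  rw [key]
  exact mul_nonneg (mul_nonneg (sq_nonneg a) (sub_nonneg.2 hst)) (by positivity)

theorem monotoneOn_mul_Rab {s : ℝ} (hs : 0 ≤ s) : MonotoneOn (fun a => a * Rab a b s) (Ioi 0) := by
  intro a₁ (ha₁ : 0 < a₁) a₂ (ha₂ : 0 < a₂) ha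
  rw [← pow_le_pow_iff_left₀ (mul_nonneg ha₁.le (Rab_nonneg ha₁ hs))
    (mul_nonneg ha₂.le (Rab_nonneg ha₂ hs)) two_ne_zero, mul_pow, mul_pow, sq_Rab ha₁ hs,
    sq_Rab ha₂ hs, mul_div_assoc', mul_div_assoc', div_le_div_iff₀ (by positivity) (by positivity),
    ← sub_nonneg]
  have key : a₂ ^ 2 * (s * (2 * a₂ + b ^ 2 * s)) * (a₁ + b ^ 2 * s) ^ 2
      - a₁ ^ 2 * (s * (2 * a₁ + b ^ 2 * s)) * (a₂ + b ^ 2 * s) ^ 2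
      = s * (a₂ - a₁) * (2 * a₁ ^ 2 * a₂ ^ 2 + 4 * a₁ * a₂ * (b ^ 2 * s) * (a₁ + a₂)
        + 2 * (b ^ 2 * s) ^ 2 * (a₁ ^ 2 + a₁ * a₂ + a₂ ^ 2)
        + 2 * a₁ * a₂ * (b ^ 2 * s) ^ 2 + (b ^ 2 * s) ^ 3 * (a₁ + a₂)) := by ring
  rw [key]
  exact mul_nonneg (mul_nonneg hs (sub_nonneg.2 ha)) (by positivity)

theorem antitoneOn_Rab_b (ha : 0 < a) {s : ℝ} (hs : 0 ≤ s) :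
    AntitoneOn (fun b => Rab a b s) (Ioi 0) := by
  intro b₁ (hb₁ : 0 < b₁) b₂ _ hb
  rw [← pow_le_pow_iff_left₀ (Rab_nonneg ha hs) (Rab_nonneg ha hs) two_ne_zero, sq_Rab ha hs,
    sq_Rab ha hs, div_le_div_iff₀ (by positivity) (by positivity), ← sub_nonneg]
  have key : s * (2 * a + b₁ ^ 2 * s) * (a + b₂ ^ 2 * s) ^ 2
      - s * (2 * a + b₂ ^ 2 * s) * (a + b₁ ^ 2 * s) ^ 2
      = s * ((b₂ ^ 2 - b₁ ^ 2) * s) * (3 * a ^ 2 + 2 * a * (b₁ ^ 2 * s) + 2 * a * (b₂ ^ 2 * s)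
        + (b₁ ^ 2 * s) * (b₂ ^ 2 * s)) := by ring
  rw [key]
  have hb2 : 0 ≤ b₂ ^ 2 - b₁ ^ 2 := sub_nonneg.2 (pow_le_pow_left₀ hb₁.le hb 2)
  positivity

theorem continuousOn_Rab (ha : 0 < a) : ContinuousOn (Rab a b) (Ici 0) :=
  (by fun_prop : Continuous fun s => Real.sqrt (s * (2 * a + b ^ 2 * s))).continuousOn.div
    (by fun_prop) fun s (hs : 0 ≤ s) => by positivity

theorem hasDerivAt_Rab (ha : 0 < a) {s : ℝ} (hs : 0 < s) :
    HasDerivAt (Rab a b)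
      (a ^ 2 / (Real.sqrt (s * (2 * a + b ^ 2 * s)) * (a + b ^ 2 * s) ^ 2)) s := by
  have hN : 0 < s * (2 * a + b ^ 2 * s) := by positivity
  have hD : 0 < a + b ^ 2 * s := by positivity
  have hDd (c : ℝ) : HasDerivAt (fun x => c + b ^ 2 * x) (b ^ 2) s := by
    simpa using ((hasDerivAt_id s).const_mul (b ^ 2)).const_add c
  have hNd : HasDerivAt (fun x => x * (2 * a + b ^ 2 * x)) (2 * a + 2 * b ^ 2 * s) s :=
    ((hasDerivAt_id' s).mul (hDd (2 * a))).congr_deriv (by ring)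
  refine ((hNd.sqrt hN.ne').div (hDd a) hD.ne').congr_deriv ?_
  field_simp
  rw [Real.sq_sqrt hN.le]
  ring

theorem lipschitzOnWith_Rab (ha : 0 < a) {m : ℝ} (hm : 0 < m) :
    LipschitzOnWith (Real.toNNReal (1 / Real.sqrt (2 * a * m))) (Rab a b) (Ici m) := by
  refine (convex_Ici m).lipschitzOnWith_of_nnnorm_hasDerivWithin_le
    (fun t ht => (hasDerivAt_Rab ha (hm.trans_le ht)).hasDerivWithinAt) fun t (ht : m ≤ t) => ?_
  have ht0 : 0 < t := hm.trans_le ht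
  have hNm : 2 * a * m ≤ t * (2 * a + b ^ 2 * t) := by
    nlinarith [mul_le_mul_of_nonneg_left ht (by positivity : (0:ℝ) ≤ 2 * a),
      mul_nonneg (sq_nonneg b) (mul_nonneg ht0.le ht0.le)]
  rw [← NNReal.coe_le_coe, coe_nnnorm, Real.coe_toNNReal _ (by positivity),
    Real.norm_of_nonneg (by positivity)]
  calc a ^ 2 / (Real.sqrt (t * (2 * a + b ^ 2 * t)) * (a + b ^ 2 * t) ^ 2)
      ≤ (a + b ^ 2 * t) ^ 2 / (Real.sqrt (t * (2 * a + b ^ 2 * t)) * (a + b ^ 2 * t) ^ 2) :=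
        div_le_div_of_nonneg_right (pow_le_pow_left₀ ha.le (by nlinarith [sq_nonneg b]) 2)
          (by positivity)
    _ = 1 / Real.sqrt (t * (2 * a + b ^ 2 * t)) := by field_simp
    _ ≤ 1 / Real.sqrt (2 * a * m) :=
        one_div_le_one_div_of_le (by positivity) (Real.sqrt_le_sqrt hNm)

end Rab

theorem Admissible.nonneg {f : ℝ → ℝ} {a b c : ℝ} (hc : Admissible f a b c)
    (hf : ContinuousOn f (Icc 0 1)) (hF : 0 ≤ Ffn f 1) (ha : 0 < a) : 0 ≤ c := by
  obtain ⟨y, hy⟩ := admissible_iff.1 hc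
  have hRy : ContinuousOn (fun v => Rab a b (y v)) (Icc 0 1) :=
    (continuousOn_Rab ha).comp hy.continuousOn fun v hv => hy.nonneg hv
  have hint := hy.integral_eq hf (continuousOn_const.mul (continuousOn_Rab ha))
  rw [intervalIntegral.integral_const_mul] at hint
  have hpos : 0 < ∫ v in (0:ℝ)..1, Rab a b (y v) :=
    intervalIntegral_pos_of_pos_on (hRy.intervalIntegrable_of_Icc zero_le_one)
      (fun v hv => Rab_pos ha (hy.pos v hv)) zero_lt_one
  by_contra! hc0
  linarith [mul_neg_of_neg_of_pos (mul_neg_of_neg_of_pos hc0 ha) hpos]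

theorem Ffn_one_nonneg {f : ℝ → ℝ} (hH : HypH f)
    (hT : TypeA f ∨ ∃ α : ℝ, TypeB f α ∨ TypeC f α) : 0 ≤ Ffn f 1 := by
  obtain ⟨-, hf0, hf1, -⟩ := hH
  rcases hT with hA | ⟨α, hB | hC⟩
  · refine integral_nonneg zero_le_one fun u hu => ?_
    rcases hu.1.eq_or_lt with rfl | hu0
    · exact hf0.ge
    rcases hu.2.eq_or_lt with rfl | hu1
    · exact hf1.ge
    exact (hA u ⟨hu0, hu1⟩).le
  · refine integral_nonneg zero_le_one fun u hu => ?_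
    rcases le_or_gt u α with huα | huα
    · exact (hB.2.1 u ⟨hu.1, huα⟩).ge
    rcases hu.2.eq_or_lt with rfl | hu1
    · exact hf1.ge
    exact (hB.2.2 u ⟨huα, hu1⟩).le
  · exact hC.2.2.2

theorem le_of_isLeast_admissible {f : ℝ → ℝ} (hf : ContinuousOn f (Icc 0 1)) (hF : 0 ≤ Ffn f 1)
    {a b a' b' c c' : ℝ} (ha : 0 < a) (ha' : 0 < a') (hb' : 0 < b')
    (hle : ∀ s, 0 < s → a * Rab a b s ≤ a' * Rab a' b' s)
    (hc : Admissible f a b c) (hc' : IsLeast {x | Admissible f a' b' x} c') : c' ≤ c := by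
  by_contra! hcc'
  have hc0 := hc.nonneg hf hF ha
  obtain ⟨Y, hY⟩ := admissible_iff.1 hc
  obtain ⟨Z, hZ⟩ := admissible_iff.1 hc'.1
  obtain ⟨c'', hcc'', hc''c'⟩ := exists_between hcc'
  have hc''0 : 0 < c'' := hc0.trans_lt hcc''
  have hR' : ∀ s, 0 < s → 0 < a' * Rab a' b' s := fun s hs => mul_pos ha' (Rab_pos ha' hs)
  have hsup : ∀ s, 0 < s → c * a * Rab a b s < c'' * a' * Rab a' b' s := fun s hs =>
    calc c * a * Rab a b s = c * (a * Rab a b s) := mul_assoc _ _ _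
      _ ≤ c * (a' * Rab a' b' s) := mul_le_mul_of_nonneg_left (hle s hs) hc0
      _ < c'' * (a' * Rab a' b' s) := mul_lt_mul_of_pos_right hcc'' (hR' s hs)
      _ = c'' * a' * Rab a' b' s := (mul_assoc _ _ _).symm
  have hsub : ∀ s, 0 < s → c'' * a' * Rab a' b' s < c' * a' * Rab a' b' s := fun s hs => by
    rw [mul_assoc, mul_assoc]
    exact mul_lt_mul_of_pos_right hc''c' (hR' s hs)
  have hZY := hY.lt_of_lt_of_monotoneOn hZ (fun s hs => (hsup s hs).trans (hsub s hs))
    fun s hs t ht hst => mul_le_mul_of_nonneg_left (monotoneOn_Rab ha' hs ht hst)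
      (mul_pos (hc''0.trans hc''c') ha').le
  obtain ⟨M, hM⟩ := isCompact_Icc.exists_bound_of_continuousOn hf
  have hC : ∀ t ∈ Icc (0:ℝ) 1, ∀ x, 0 ≤ x →
      |c'' * a' * Rab a' b' x - f t| ≤ c'' * a' * b'⁻¹ + M := by
    intro t ht x hx
    have hR := mul_le_mul_of_nonneg_left (Rab_le_inv ha' hb' hx) (by positivity : 0 ≤ c'' * a')
    have hR0 := mul_nonneg (by positivity : 0 ≤ c'' * a') (Rab_nonneg ha' (b := b') hx)
    have hft := abs_le.1 ((Real.norm_eq_abs _).symm.trans_le (hM t ht))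
    rw [abs_sub_le_iff]
    constructor <;> linarith
  have hGl : ∀ m > 0, ∃ K, LipschitzOnWith K (fun s => c'' * a' * Rab a' b' s) (Ici m) :=
    fun m hm =>
      ⟨_, (lipschitzWith_smul (c'' * a')).comp_lipschitzOnWith (lipschitzOnWith_Rab ha' hm)⟩
  obtain ⟨w, hw⟩ := exists_isPosSolution_between (G := fun s => c'' * a' * Rab a' b' s) hf
    (continuousOn_const.mul (continuousOn_Rab ha')) hC hGl hY hZ hsup hsub
    (by simp only [Rab_zero, mul_zero]) (by simp only [Rab_zero, mul_zero])
    fun v hv => (hZY v hv).le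
  exact hc''c'.not_ge (hc'.2 (admissible_iff.2 ⟨w, hw⟩))

/-- monotonicity of the critical speed: for fixed `b` the critical speed
is nonincreasing in `a`, and for fixed `a` it is nondecreasing in `b`. -/
theorem statement3 (f : ℝ → ℝ) (hH : HypH f)
    (hT : TypeA f ∨ ∃ α : ℝ, TypeB f α ∨ TypeC f α) :
    (∀ b : ℝ, 0 < b → ∀ a₁ a₂ : ℝ, 0 < a₁ → a₁ ≤ a₂ →
      ∀ c₁ c₂ : ℝ, IsLeast {c | Admissible f a₁ b c} c₁ →
        IsLeast {c | Admissible f a₂ b c} c₂ → c₂ ≤ c₁) ∧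
    (∀ a : ℝ, 0 < a → ∀ b₁ b₂ : ℝ, 0 < b₁ → b₁ ≤ b₂ →
      ∀ c₁ c₂ : ℝ, IsLeast {c | Admissible f a b₁ c} c₁ →
        IsLeast {c | Admissible f a b₂ c} c₂ → c₁ ≤ c₂) := by
  have hF := Ffn_one_nonneg hH hT
  refine ⟨fun b hb a₁ a₂ ha₁ ha c₁ c₂ h₁ h₂ => ?_, fun a ha b₁ b₂ hb₁ hb c₁ c₂ h₁ h₂ => ?_⟩
  · exact le_of_isLeast_admissible hH.1 hF ha₁ (ha₁.trans_le ha) hb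
      (fun s hs => monotoneOn_mul_Rab hs.le ha₁ (ha₁.trans_le ha) ha) h₁.1 h₂
  · exact le_of_isLeast_admissible hH.1 hF ha ha hb₁
      (fun s hs => mul_le_mul_of_nonneg_left (antitoneOn_Rab_b ha hs.le hb₁ (hb₁.trans_le hb) hb)
        ha.le) h₂.1 h₁
end

section
/- Let f satisfy hypothesis (H) and be of type C with switching point α and F(1) > 0, and let v_* ∈ (α, 1) be the unique point with F(v_*) = 0. For ε > 0 let v_ε be the critical front profile for parameters a = b = 1/ε normalized by v_ε(0) = α. Then, as ε → 0⁺, v_ε converges uniformly on the interval (−∞, v_* − α) to the piecewise linear function z ↦ min(max(z + α, 0), 1). -/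
open Real Set Filter Topology

/-!
Write `a = 1/ε` and `G = v'/√(a² - a²v'²) = ε v'/√(1 - v'²)`. Admissible speeds are nonnegative
because `F(1) > 0`, and for `c ≥ 0` the quantity `√(ε² + G²) + F(v) = ε/√(1 - v'²) + F(v)` is
nondecreasing along the front and tends to `ε` at `-∞`. Hence wherever `F(v) ≤ -m < 0` we get
`1 - v' ≤ ε²/m²`. Since `F < 0` on `(0, v_*)`, the slope is uniformly close to `1` while `v`
ranges over any compact subinterval of `(0, v_*)`; together with `v' < 1` and `v(0) = α` this
pins `v` to the ramp `z + α` up to an error that vanishes with `ε`.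
-/

section

variable {f : ℝ → ℝ}

lemma Ffn_zero (f : ℝ → ℝ) : Ffn f 0 = 0 := intervalIntegral.integral_same

lemma hasDerivAt_Ffn (hf : ContinuousOn f (Icc 0 1)) {x : ℝ} (hx : x ∈ Ioo (0:ℝ) 1) :
    HasDerivAt (Ffn f) (f x) x :=
  intervalIntegral.integral_hasDerivAt_right
    (hf.mono (by rw [uIcc_of_le hx.1.le]; exact Icc_subset_Icc le_rfl hx.2.le)).intervalIntegrable
    ((hf.mono Ioo_subset_Icc_self).stronglyMeasurableAtFilter isOpen_Ioo x hx)
    (hf.continuousAt (Icc_mem_nhds hx.1 hx.2))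

lemma continuousOn_Ffn (hf : ContinuousOn f (Icc 0 1)) : ContinuousOn (Ffn f) (Icc 0 1) := by
  have h := intervalIntegral.continuousOn_primitive_interval (a := (0:ℝ)) (b := 1)
    (μ := MeasureTheory.volume) (by rw [uIcc_of_le zero_le_one]; exact hf.integrableOn_Icc)
  rwa [uIcc_of_le zero_le_one] at h

lemma deriv_Ffn (hf : ContinuousOn f (Icc 0 1)) {x : ℝ} (hx : x ∈ Ioo (0:ℝ) 1) :
    deriv (Ffn f) x = f x :=
  (hasDerivAt_Ffn hf hx).deriv

namespace TypeC

variable {α : ℝ}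

lemma strictAntiOn_Ffn (hf : ContinuousOn f (Icc 0 1)) (hC : TypeC f α) :
    StrictAntiOn (Ffn f) (Icc 0 α) :=
  strictAntiOn_of_deriv_neg (convex_Icc 0 α) ((continuousOn_Ffn hf).mono
    (Icc_subset_Icc le_rfl hC.1.2.le)) fun x hx => by
    rw [interior_Icc] at hx
    rw [deriv_Ffn hf ⟨hx.1, hx.2.trans hC.1.2⟩]
    exact hC.2.1 x hx

lemma strictMonoOn_Ffn (hf : ContinuousOn f (Icc 0 1)) (hC : TypeC f α) :
    StrictMonoOn (Ffn f) (Icc α 1) :=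
  strictMonoOn_of_deriv_pos (convex_Icc α 1) ((continuousOn_Ffn hf).mono
    (Icc_subset_Icc hC.1.1.le le_rfl)) fun x hx => by
    rw [interior_Icc] at hx
    rw [deriv_Ffn hf ⟨hC.1.1.trans hx.1, hx.2⟩]
    exact hC.2.2.1 x hx

lemma Ffn_neg (hf : ContinuousOn f (Icc 0 1)) (hC : TypeC f α) {vstar w : ℝ}
    (hvs : vstar ∈ Icc α 1) (hFvs : Ffn f vstar = 0) (hw : w ∈ Ioo 0 vstar) : Ffn f w < 0 := by
  rcases le_or_gt w α with hwα | hαw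
  · simpa [Ffn_zero] using hC.strictAntiOn_Ffn hf ⟨le_rfl, hC.1.1.le⟩ ⟨hw.1.le, hwα⟩ hw.1
  · simpa [hFvs] using
      hC.strictMonoOn_Ffn hf ⟨hαw.le, hw.2.le.trans hvs.2⟩ hvs hw.2

lemma exists_pos_forall_Ffn_le_neg (hf : ContinuousOn f (Icc 0 1)) (hC : TypeC f α)
    {vstar s t : ℝ} (hvs : vstar ∈ Icc α 1) (hFvs : Ffn f vstar = 0) (hs : 0 < s)
    (ht : t < vstar) : ∃ m > 0, ∀ x ∈ Icc s t, Ffn f x ≤ -m := by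
  have hsub : Icc s t ⊆ Ioo 0 vstar := Icc_subset_Ioo hs ht
  obtain ⟨m, hm, hle⟩ := isCompact_Icc.exists_forall_le' (a := 0) (f := fun x => -Ffn f x)
    ((continuousOn_Ffn hf).neg.mono (hsub.trans (Ioo_subset_Icc_self.trans
      (Icc_subset_Icc le_rfl hvs.2))))
    fun x hx => neg_pos.2 (hC.Ffn_neg hf hvs hFvs (hsub hx))
  exact ⟨m, hm, fun x hx => le_neg.2 (hle x hx)⟩

end TypeC

lemma Admissible.speed_nonneg (hf : ContinuousOn f (Icc 0 1)) (hF1 : 0 < Ffn f 1)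
    {a b c : ℝ} (ha : 0 < a) (hadm : Admissible f a b c) : 0 ≤ c := by
  obtain ⟨y, hy0, hy1, hypos, hyd⟩ := hadm
  by_contra! hc
  -- `y' + f ≤ 0` on `(0,1)` when `c < 0`, so `y + F` decreases from `0` to `F(1) > 0`.
  have hanti : AntitoneOn (fun x => y x + Ffn f x) (Icc 0 1) := by
    have hderiv : ∀ x ∈ Ioo (0:ℝ) 1,
        HasDerivAt (fun x => y x + Ffn f x) (c * a * Rab a b (y x) - f x + f x) x :=
      fun x hx => ((hyd x (Ioo_subset_Icc_self hx)).hasDerivAt (Icc_mem_nhds hx.1 hx.2)).add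
        (hasDerivAt_Ffn hf hx)
    refine antitoneOn_of_deriv_nonpos (convex_Icc 0 1)
      (ContinuousOn.add (fun x hx => (hyd x hx).continuousWithinAt) (continuousOn_Ffn hf)) ?_ ?_
    · rw [interior_Icc]
      exact fun x hx => (hderiv x hx).differentiableAt.differentiableWithinAt
    · rw [interior_Icc]
      intro x hx
      have hR : 0 ≤ Rab a b (y x) :=
        div_nonneg (Real.sqrt_nonneg _) (by have := hypos x hx; positivity)
      rw [(hderiv x hx).deriv, sub_add_cancel]
      exact mul_nonpos_of_nonpos_of_nonneg (mul_nonpos_of_nonpos_of_nonneg hc.le ha.le) hR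
  have := hanti (left_mem_Icc.2 zero_le_one) (right_mem_Icc.2 zero_le_one) zero_le_one
  simp only [hy0, hy1, Ffn_zero] at this
  linarith

end

lemma sqrt_inv_sq_add_sq_div_sqrt {a p : ℝ} (ha : 0 < a) (hp : p ^ 2 < 1) :
    √(a⁻¹ ^ 2 + (p / √(a ^ 2 - a ^ 2 * p ^ 2)) ^ 2) = 1 / √(a ^ 2 - a ^ 2 * p ^ 2) := by
  have hq : 0 < a ^ 2 - a ^ 2 * p ^ 2 := by nlinarith [pow_pos ha 2]
  have hp' : 1 - p ^ 2 ≠ 0 := by linarith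
  rw [div_pow, Real.sq_sqrt hq.le, one_div, ← Real.sqrt_inv]
  congr 1
  rw [show a ^ 2 - a ^ 2 * p ^ 2 = a ^ 2 * (1 - p ^ 2) by ring]
  field_simp
  ring

noncomputable def relMomentum (a b : ℝ) (v : ℝ → ℝ) (t : ℝ) : ℝ :=
  deriv v t / √(a ^ 2 - b ^ 2 * deriv v t ^ 2)

namespace FrontProfile

variable {f : ℝ → ℝ} {a b c : ℝ} {v : ℝ → ℝ}

lemma mem_Ioo (hv : FrontProfile f a b c v) (z : ℝ) : v z ∈ Ioo 0 1 :=
  ⟨(hv.1.monotone.le_of_tendsto hv.2.2.2.2.1 (z - 1)).trans_lt (hv.1 (by linarith)),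
    (hv.1 (by linarith : z < z + 1)).trans_le (hv.1.monotone.ge_of_tendsto hv.2.2.2.2.2 _)⟩

lemma differentiable (hv : FrontProfile f a b c v) : Differentiable ℝ v :=
  hv.2.1.differentiable two_ne_zero

lemma deriv_nonneg (hv : FrontProfile f a b c v) (z : ℝ) : 0 ≤ deriv v z :=
  hv.1.monotone.deriv_nonneg

lemma sq_deriv_lt_one (ha : 0 < a) (hv : FrontProfile f a a c v) (z : ℝ) :
    deriv v z ^ 2 < 1 := by
  have h := hv.2.2.1 z
  rw [div_self ha.ne'] at h
  exact (sq_lt_one_iff_abs_lt_one _).2 h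

lemma hasDerivAt_relMomentum (ha : 0 < a) (hv : FrontProfile f a a c v) (z : ℝ) :
    HasDerivAt (relMomentum a a v) (c * deriv v z - f (v z)) z := by
  have hq : 0 < a ^ 2 - a ^ 2 * deriv v z ^ 2 := by
    nlinarith [pow_pos ha 2, hv.sq_deriv_lt_one ha z]
  have hd : DifferentiableAt ℝ (relMomentum a a v) z :=
    (hv.2.1.differentiable_deriv_two z).div
      (((differentiableAt_const _).sub
        ((differentiableAt_const _).mul ((hv.2.1.differentiable_deriv_two z).pow 2))).sqrt hq.ne')
      (Real.sqrt_pos.2 hq).ne'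
  have hode : deriv (relMomentum a a v) z = c * deriv v z - f (v z) := by
    linarith [show deriv (relMomentum a a v) z - c * deriv v z + f (v z) = 0 from hv.2.2.2.1 z]
  exact hode ▸ hd.hasDerivAt

/-- With `G = relMomentum a a v` one has `G = v' √(a⁻² + G²)`, so `(√(a⁻² + G²))' = v' G'` and,
by the front equation `G' = c v' - f(v)`, this Lyapunov function has derivative `c v'² ≥ 0`. -/
lemma monotone_energy (hf : ContinuousOn f (Icc 0 1)) (ha : 0 < a) (hc : 0 ≤ c)
    (hv : FrontProfile f a a c v) :
    Monotone (fun t => √(a⁻¹ ^ 2 + relMomentum a a v t ^ 2) + Ffn f (v t)) := by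
  have key : ∀ z, HasDerivAt (fun t => √(a⁻¹ ^ 2 + relMomentum a a v t ^ 2) + Ffn f (v t))
      (c * deriv v z ^ 2) z := by
    intro z
    have hW := (((hv.hasDerivAt_relMomentum ha z).pow 2).const_add (a⁻¹ ^ 2)).sqrt
      (add_pos_of_pos_of_nonneg (pow_pos (inv_pos.2 ha) 2) (sq_nonneg _)).ne'
    have hF := (hasDerivAt_Ffn hf (hv.mem_Ioo z)).comp z (hv.differentiable z).hasDerivAt
    refine (hW.add hF).congr_deriv ?_
    have hs : √(a ^ 2 - a ^ 2 * deriv v z ^ 2) ≠ 0 :=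
      (Real.sqrt_pos.2 (by nlinarith [pow_pos ha 2, hv.sq_deriv_lt_one ha z])).ne'
    simp only [Pi.pow_apply, relMomentum, sqrt_inv_sq_add_sq_div_sqrt ha (hv.sq_deriv_lt_one ha z)]
    generalize √(a ^ 2 - a ^ 2 * deriv v z ^ 2) = s at hs ⊢
    push_cast
    field_simp
    ring
  exact monotone_of_deriv_nonneg (fun z => (key z).differentiableAt)
    fun z => (key z).deriv ▸ mul_nonneg hc (sq_nonneg _)

lemma inv_le_energy (hf : ContinuousOn f (Icc 0 1)) (ha : 0 < a) (hc : 0 ≤ c)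
    (hv : FrontProfile f a a c v) (z : ℝ) :
    a⁻¹ ≤ √(a⁻¹ ^ 2 + relMomentum a a v z ^ 2) + Ffn f (v z) := by
  have hFlim : Tendsto (fun t => a⁻¹ + Ffn f (v t)) atBot (𝓝 a⁻¹) := by
    have h := ((continuousOn_Ffn hf) 0 (left_mem_Icc.2 zero_le_one)).tendsto.comp
      (tendsto_nhdsWithin_iff.2 ⟨hv.2.2.2.2.1,
        Eventually.of_forall fun t => Ioo_subset_Icc_self (hv.mem_Ioo t)⟩)
    simpa [Ffn_zero] using h.const_add a⁻¹
  refine le_of_tendsto hFlim ?_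
  filter_upwards [eventually_le_atBot z] with t ht
  calc a⁻¹ + Ffn f (v t) ≤ √(a⁻¹ ^ 2 + relMomentum a a v t ^ 2) + Ffn f (v t) := by
        gcongr
        exact Real.le_sqrt_of_sq_le (le_add_of_nonneg_right (sq_nonneg _))
    _ ≤ _ := hv.monotone_energy hf ha hc ht

lemma one_sub_deriv_le (hf : ContinuousOn f (Icc 0 1)) (ha : 0 < a) (hc : 0 ≤ c)
    (hv : FrontProfile f a a c v) {m z : ℝ} (hm : 0 < m) (hFm : Ffn f (v z) ≤ -m) :
    1 - deriv v z ≤ 1 / (a * m) ^ 2 := by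
  set p := deriv v z
  have hp := hv.sq_deriv_lt_one ha z
  have hp0 : 0 ≤ p := hv.deriv_nonneg z
  have hq : 0 < a ^ 2 - a ^ 2 * p ^ 2 := by nlinarith [pow_pos ha 2]
  have hE := hv.inv_le_energy hf ha hc z
  rw [relMomentum, sqrt_inv_sq_add_sq_div_sqrt ha hp] at hE
  have hm_le : m * √(a ^ 2 - a ^ 2 * p ^ 2) ≤ 1 := by
    rw [← le_div_iff₀ (Real.sqrt_pos.2 hq)]
    linarith [inv_pos.2 ha]
  have hmq : m ^ 2 * (a ^ 2 - a ^ 2 * p ^ 2) ≤ 1 := by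
    have := pow_le_one₀ (by positivity) hm_le (n := 2)
    rwa [mul_pow, Real.sq_sqrt hq.le] at this
  rw [le_div_iff₀ (by positivity)]
  nlinarith [mul_nonneg (mul_nonneg hp0 (by nlinarith : 0 ≤ 1 - p)) (sq_nonneg (a * m))]

end FrontProfile

lemma abs_sub_ramp_le {v : ℝ → ℝ} {α β δ₀ η z : ℝ} (hd : Differentiable ℝ v)
    (hmono : Monotone v) (hv0 : v 0 = α) (hv : ∀ t, v t ∈ Icc (0:ℝ) 1)
    (hle : ∀ t, deriv v t ≤ 1) (hη : η ≤ 1 / 2) (hδ₀ : δ₀ ≤ α) (hβ : α ≤ β)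
    (hge : ∀ t, v t ∈ Icc δ₀ β → 1 - η ≤ deriv v t) (hz : z + α ≤ β + δ₀) :
    |v z - max (z + α) 0| ≤ max δ₀ (2 * η) := by
  have hη0 : 0 ≤ η := by linarith [hge 0 (hv0 ▸ ⟨hδ₀, hβ⟩), hle 0]
  have hlip : ∀ s t, s ≤ t → v t - v s ≤ t - s := fun s t hst => by
    simpa using image_sub_le_mul_sub_of_deriv_le hd hle hst
  have hsteep : ∀ s t, s ≤ t → δ₀ ≤ v s → v t ≤ β → (1 - η) * (t - s) ≤ v t - v s :=
    fun s t hst hs ht => (convex_Icc s t).mul_sub_le_image_sub_of_le_deriv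
      hd.continuous.continuousOn hd.differentiableOn (fun x hx => by
        rw [interior_Icc] at hx
        exact hge x ⟨hs.trans (hmono hx.1.le), (hmono hx.2.le).trans ht⟩)
      s (left_mem_Icc.2 hst) t (right_mem_Icc.2 hst) hst
  have hδη : δ₀ ≤ max δ₀ (2 * η) := le_max_left _ _
  have hηδ : 2 * η ≤ max δ₀ (2 * η) := le_max_right _ _
  obtain ⟨hv0z, hvz1⟩ := hv z
  have hα1 : α ≤ 1 := hv0 ▸ (hv 0).2
  rw [abs_le]
  rcases le_total z 0 with hz0 | hz0
  · have hbelow := hlip z 0 hz0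
    rw [hv0] at hbelow
    have hmax : max (z + α) 0 ≤ v z := max_le (by linarith) hv0z
    rcases le_total (v z) δ₀ with hvδ | hδv
    · constructor <;> linarith [le_max_right (z + α) 0]
    · have h := hsteep z 0 hz0 hδv (hv0 ▸ hβ)
      rw [hv0] at h
      have hz2 : -z ≤ 2 := by nlinarith [mul_nonneg (sub_nonneg.2 hη) (neg_nonneg.2 hz0)]
      constructor <;> nlinarith [le_max_left (z + α) 0]
  · have habove := hlip 0 z hz0
    rw [hv0] at habove
    have hα0 : 0 ≤ α := hv0 ▸ (hv 0).1
    have hramp : max (z + α) 0 = z + α := max_eq_left (by linarith)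
    rw [hramp]
    rcases le_total β (v z) with hβv | hvβ
    · constructor <;> linarith
    · have h := hsteep 0 z hz0 (hv0 ▸ hδ₀) hvβ
      rw [hv0] at h
      have hz2 : z ≤ 2 := by nlinarith [mul_nonneg (sub_nonneg.2 hη) hz0]
      constructor <;> nlinarith

/-- Proposition 4.9: type C reaction with `F(1) > 0`, `v_*` the unique
zero of `F` in `(α,1)`. For `a = b = 1/ε`, the critical profiles normalized by
`v_ε(0) = α` converge, uniformly on `(−∞, v_* − α)`, to the piecewise linear profile
`z ↦ min(max(z + α, 0), 1)`. -/
theorem statement19 (f : ℝ → ℝ) (α vstar : ℝ) (hH : HypH f) (hC : TypeC f α)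
    (hF1 : 0 < Ffn f 1)
    (hvstar : vstar ∈ Set.Ioo α 1 ∧ Ffn f vstar = 0 ∧
      ∀ w ∈ Set.Ioo α 1, Ffn f w = 0 → w = vstar)
    (cfun : ℝ → ℝ) (vfun : ℝ → ℝ → ℝ)
    (hcrit : ∀ ε : ℝ, 0 < ε → IsLeast {c | Admissible f (1/ε) (1/ε) c} (cfun ε))
    (hprof : ∀ ε : ℝ, 0 < ε →
      FrontProfile f (1/ε) (1/ε) (cfun ε) (vfun ε) ∧ vfun ε 0 = α) :
    TendstoUniformlyOn vfun (fun z => min (max (z + α) 0) 1)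
      (nhdsWithin 0 (Set.Ioi 0)) (Set.Iio (vstar - α)) := by
  obtain ⟨hf, -⟩ := hH
  obtain ⟨⟨hαvs, hvs1⟩, hFvs, -⟩ := hvstar
  rw [Metric.tendstoUniformlyOn_iff]
  intro δ hδ
  set δ₀ := min (δ / 2) (min α (vstar - α))
  set η := min (δ / 4) (1 / 2)
  have hδ₀ : 0 < δ₀ := lt_min (by linarith) (lt_min hC.1.1 (by linarith))
  have hδ₀α : δ₀ ≤ α := (min_le_right _ _).trans (min_le_left _ _)
  have hδ₀vs : δ₀ ≤ vstar - α := (min_le_right _ _).trans (min_le_right _ _)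
  have hη : 0 < η := lt_min (by linarith) one_half_pos
  obtain ⟨m, hm, hFm⟩ := hC.exists_pos_forall_Ffn_le_neg hf ⟨hαvs.le, hvs1.le⟩ hFvs hδ₀
    (show vstar - δ₀ < vstar by linarith)
  have hsmall : ∀ᶠ ε in 𝓝 (0:ℝ), ε ^ 2 / m ^ 2 < η :=
    (((continuous_pow 2).div_const _).tendsto' 0 0 (by simp)).eventually (gt_mem_nhds hη)
  filter_upwards [self_mem_nhdsWithin, nhdsWithin_le_nhds hsmall] with ε (hε : 0 < ε) hεm z hz
  obtain ⟨hv, hv0⟩ := hprof ε hε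
  have ha : (0:ℝ) < 1 / ε := by positivity
  have hc := (hcrit ε hε).1.speed_nonneg hf hF1 ha
  have hslope : ∀ t, vfun ε t ∈ Icc δ₀ (vstar - δ₀) → 1 - η ≤ deriv (vfun ε) t := fun t ht => by
    have h := hv.one_sub_deriv_le hf ha hc hm (hFm _ ht)
    rw [show 1 / (1 / ε * m) ^ 2 = ε ^ 2 / m ^ 2 by field_simp] at h
    linarith
  have hclose := abs_sub_ramp_le hv.differentiable hv.1.monotone hv0
    (fun t => Ioo_subset_Icc_self (hv.mem_Ioo t))
    (fun t => by nlinarith [hv.sq_deriv_lt_one ha t, hv.deriv_nonneg t])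
    (min_le_right _ _) hδ₀α (by linarith) hslope (show z + α ≤ vstar - δ₀ + δ₀ by linarith [hz.out])
  have hz1 : max (z + α) 0 ≤ 1 := max_le (by linarith [hz.out]) zero_le_one
  rw [min_eq_left hz1, Real.dist_eq, abs_sub_comm]
  exact hclose.trans_lt (max_lt (by linarith [min_le_left (δ / 2) (min α (vstar - α))])
    (by linarith [min_le_left (δ / 4) (1 / 2)]))
end
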